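/- arXiv:1212.6462 — 4 statements merged into one kernel-verified Lean document; each statement's English description precedes it below -/
import Mathlib

section
/- The set C_n of partial cyclic shifts is closed under composition and inverses, hence is an inverse subsemigroup of R_n. -/
/-!
A partial injection of `Fin n` is a cyclic shift exactly when it preserves the strict cyclic
betweenness `sbtw` of `Fin n`: in the sorted enumerations of domain and range it then becomes an
injective self-map of `Fin k` preserving the cyclic order, and such a map sends each `r + 1` to
`g r + 1` (nothing lies strictly between `r` and `r + 1`), so it is a rotation. Preservation of
`sbtw` is obviously stable under composition, and it passes to the inverse because three distinct
points of a circular order are in exactly one of the two cyclic orientations.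
-/

/-- The rook monoid `R_n`: injective partial functions on `Fin n`. -/
abbrev PartialInj (n : ℕ) :=
  {f : Fin n → Option (Fin n) // ∀ a b c : Fin n, f a = some c → f b = some c → a = b}

/-- Composition in `R_n`: `pcomp f g` applies `g` first, then `f`. -/
def pcomp {n : ℕ} (f g : PartialInj n) : PartialInj n :=
  ⟨fun a => (g.1 a).bind f.1, by
    intro a b c ha hb
    rcases Option.bind_eq_some_iff.mp ha with ⟨a', ha1, ha2⟩
    rcases Option.bind_eq_some_iff.mp hb with ⟨b', hb1, hb2⟩
    have h := f.2 a' b' c ha2 hb2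
    subst h
    exact g.2 a b a' ha1 hb1⟩

/-- The inverse of a partial injection. -/
noncomputable def pinv {n : ℕ} (f : PartialInj n) : PartialInj n :=
  ⟨fun b => if h : ∃ a, f.1 a = some b then some h.choose else none, by
    intro a b c ha hb
    dsimp only at ha hb
    split_ifs at ha hb with h1 h2
    · have sa := h1.choose_spec
      have sb := h2.choose_spec
      rw [Option.some_inj] at ha hb
      rw [ha] at sa; rw [hb] at sb
      exact Option.some_inj.mp (sa.symm.trans sb)⟩

/-- The domain of a partial injection, as a finset. -/
def domFinset {n : ℕ} (f : PartialInj n) : Finset (Fin n) :=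
  Finset.univ.filter fun a => (f.1 a).isSome

/-- The range of a partial injection, as a finset. -/
def ranFinset {n : ℕ} (f : PartialInj n) : Finset (Fin n) :=
  Finset.univ.filter fun b => ∃ a, f.1 a = some b

/-- `σ` is a cyclic shift from its domain `{s_1 < ... < s_k}` to its range
`{t_1 < ... < t_k}`: for some `j`, `σ(s_r) = t_{(j + r) mod k}`. -/
def IsCyclicShift {n : ℕ} (σ : PartialInj n) : Prop :=
  ∃ (k : ℕ) (hD : (domFinset σ).card = k) (hR : (ranFinset σ).card = k) (j : ℕ),
    ∀ r : Fin k, σ.1 ((domFinset σ).orderIsoOfFin hD r : Fin n) =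
      some (((ranFinset σ).orderIsoOfFin hR ⟨(j + r.1) % k, Nat.mod_lt _ r.pos⟩ : Fin n))

open Function

theorem sbtw_or_sbtw_of_ne {α : Type*} [CircularOrder α] {a b c : α}
    (hab : a ≠ b) (hbc : b ≠ c) (hca : c ≠ a) : sbtw a b c ∨ sbtw c b a := by
  rw [sbtw_iff_not_btw, sbtw_iff_not_btw, ← not_and_or]
  intro h
  rcases h.2.antisymm h.1 with h | h | h <;> tauto

namespace Fin

theorem sbtw_map_iff {k n : ℕ} {f : Fin k → Fin n} (hf : StrictMono f) {a b c : Fin k} :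
    sbtw (f a) (f b) (f c) ↔ sbtw a b c := by
  simp only [Fin.sbtw_iff, hf.lt_iff_lt]

theorem sbtw_add_left_iff {k : ℕ} (j : Fin k) {a b c : Fin k} :
    sbtw (j + a) (j + b) (j + c) ↔ sbtw a b c := by
  simp only [Fin.sbtw_iff, Fin.lt_def, Fin.val_add_eq_ite]
  have := j.2; have := a.2; have := b.2; have := c.2
  split_ifs <;> omega

theorem not_sbtw_add_one {m : ℕ} (x y : Fin (m + 1)) : ¬ sbtw x y (x + 1) := by
  simp only [Fin.sbtw_iff, Fin.lt_def, Fin.val_add_one, Fin.ext_iff, Fin.val_last]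
  have := x.2; have := y.2
  split_ifs <;> omega

theorem sbtw_add_one_of_ne {m : ℕ} {r s : Fin (m + 1)} (hr : s ≠ r) (hr' : s ≠ r + 1) :
    sbtw r (r + 1) s := by
  simp only [Fin.sbtw_iff, Fin.lt_def, Ne, Fin.ext_iff, Fin.val_add_one, Fin.val_last] at *
  have := r.2; have := s.2
  split_ifs at * <;> omega

theorem apply_eq_apply_zero_add_of_sbtw {m : ℕ} {g : Fin (m + 1) → Fin (m + 1)}
    (hg : Injective g) (hpres : ∀ a b c, sbtw a b c → sbtw (g a) (g b) (g c)) (r : Fin (m + 1)) :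
    g r = g 0 + r := by
  have step : ∀ r, g (r + 1) = g r + 1 := by
    intro r
    by_contra hne
    obtain ⟨s, hs⟩ := Finite.injective_iff_surjective.mp hg (g r + 1)
    have hsr : s ≠ r := by
      -- `s = r` forces `1 = 0` in `Fin (m + 1)`, so `r + 1 = r` and `hne` is absurd.
      rintro rfl
      have h10 : (1 : Fin (m + 1)) = 0 := by simpa using hs
      simp [h10] at hne
    have hsr' : s ≠ r + 1 := by
      rintro rfl
      exact hne hs
    exact not_sbtw_add_one (g r) (g (r + 1)) (hs ▸ hpres _ _ _ (sbtw_add_one_of_ne hsr hsr'))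
  induction r using Fin.induction with
  | zero => simp
  | succ i ih => rw [← Fin.coeSucc_eq_succ, step, ih, add_assoc]

end Fin

def PreservesSBtw {α β : Type*} [SBtw α] [SBtw β] (f : α → Option β) : Prop :=
  ∀ ⦃a b c : α⦄ ⦃a' b' c' : β⦄,
    f a = some a' → f b = some b' → f c = some c' → sbtw a b c → sbtw a' b' c'

namespace PreservesSBtw

variable {α β γ : Type*}

theorem bind [SBtw α] [SBtw β] [SBtw γ] {f : β → Option γ} {g : α → Option β}
    (hf : PreservesSBtw f) (hg : PreservesSBtw g) : PreservesSBtw fun a => (g a).bind f := by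
  intro a b c a' b' c' ha hb hc habc
  obtain ⟨x, hxa, hx⟩ := Option.bind_eq_some_iff.mp ha
  obtain ⟨y, hyb, hy⟩ := Option.bind_eq_some_iff.mp hb
  obtain ⟨z, hzc, hz⟩ := Option.bind_eq_some_iff.mp hc
  exact hf hx hy hz (hg hxa hyb hzc habc)

theorem sbtw_of_sbtw [CircularOrder α] [CircularOrder β] {f : α → Option β}
    (hf : PreservesSBtw f) {a b c : α} {a' b' c' : β}
    (ha : f a = some a') (hb : f b = some b') (hc : f c = some c') (h : sbtw a' b' c') :
    sbtw a b c := by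
  have ne_of_ne : ∀ {x y : α} {x' y' : β}, f x = some x' → f y = some y' → x' ≠ y' → x ≠ y := by
    rintro x _ x' y' hx hy hxy rfl
    exact hxy (Option.some_inj.mp (hx.symm.trans hy))
  have hab := ne_of_ne ha hb fun e => sbtw_irrefl_left (e ▸ h)
  have hbc := ne_of_ne hb hc fun e => sbtw_irrefl_right (e ▸ h)
  have hca := ne_of_ne hc ha fun e => sbtw_irrefl_left_right (e ▸ h)
  exact (sbtw_or_sbtw_of_ne hab hbc hca).resolve_right fun h' => sbtw_asymm h (hf hc hb ha h')

end PreservesSBtw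

section PartialInj

variable {n : ℕ}

theorem mem_domFinset {σ : PartialInj n} {a : Fin n} : a ∈ domFinset σ ↔ (σ.1 a).isSome := by
  simp [domFinset]

theorem mem_ranFinset {σ : PartialInj n} {b : Fin n} : b ∈ ranFinset σ ↔ ∃ a, σ.1 a = some b := by
  simp [ranFinset]

theorem card_ranFinset (σ : PartialInj n) : (ranFinset σ).card = (domFinset σ).card := by
  refine (Finset.card_bij (fun a ha => (σ.1 a).get (mem_domFinset.mp ha)) ?_ ?_ ?_).symm
  · exact fun a _ => mem_ranFinset.mpr ⟨a, (Option.some_get _).symm⟩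
  · intro a _ b _ h
    exact σ.2 a b _ (Option.some_get _).symm (by rw [h]; exact (Option.some_get _).symm)
  · intro b hb
    obtain ⟨a, ha⟩ := mem_ranFinset.mp hb
    exact ⟨a, mem_domFinset.mpr (by simp [ha]), Option.get_of_eq_some _ ha⟩

theorem pinv_eq_some {σ : PartialInj n} {a b : Fin n} (h : (pinv σ).1 b = some a) :
    σ.1 a = some b := by
  simp only [pinv] at h
  split_ifs at h with hb
  exact Option.some_inj.mp h ▸ hb.choose_spec

theorem IsCyclicShift.preservesSBtw {σ : PartialInj n} (h : IsCyclicShift σ) :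
    PreservesSBtw σ.1 := by
  obtain ⟨k, hD, hR, j, hσ⟩ := h
  simp only [Finset.coe_orderIsoOfFin_apply] at hσ
  set e := (domFinset σ).orderEmbOfFin hD
  set e' := (ranFinset σ).orderEmbOfFin hR
  have mem_range_e : ∀ {a a'}, σ.1 a = some a' → a ∈ Set.range e := fun ha => by
    rw [Finset.range_orderEmbOfFin]
    exact mem_domFinset.mpr (by simp [ha])
  intro a b c a' b' c' ha hb hc habc
  obtain ⟨ra, rfl⟩ := mem_range_e ha
  obtain ⟨rb, rfl⟩ := mem_range_e hb
  obtain ⟨rc, rfl⟩ := mem_range_e hc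
  rcases k with _ | m
  · exact ra.elim0
  have hrot : ∀ r, σ.1 (e r) = some (e' (Fin.ofNat (m + 1) j + r)) := fun r => by
    rw [hσ r]
    congr 2
    ext
    simp [Fin.val_add, Nat.add_mod]
  rw [hrot, Option.some_inj] at ha hb hc
  subst ha hb hc
  rw [Fin.sbtw_map_iff e'.strictMono, Fin.sbtw_add_left_iff, ← Fin.sbtw_map_iff e.strictMono]
  exact habc

theorem isCyclicShift_of_preservesSBtw {σ : PartialInj n} (hσ : PreservesSBtw σ.1) :
    IsCyclicShift σ := by
  obtain ⟨k, hD⟩ : ∃ k, (domFinset σ).card = k := ⟨_, rfl⟩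
  have hR : (ranFinset σ).card = k := (card_ranFinset σ).trans hD
  refine ⟨k, hD, hR, ?_⟩
  rcases k with _ | m
  · exact ⟨0, fun r => r.elim0⟩
  simp only [Finset.coe_orderIsoOfFin_apply]
  set e := (domFinset σ).orderEmbOfFin hD
  set e' := (ranFinset σ).orderEmbOfFin hR
  have hσe : ∀ r, ∃ s, σ.1 (e r) = some (e' s) := by
    intro r
    obtain ⟨b, hb⟩ := Option.isSome_iff_exists.mp
      (mem_domFinset.mp ((domFinset σ).orderEmbOfFin_mem hD r))
    obtain ⟨s, rfl⟩ : b ∈ Set.range e' := by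
      rw [Finset.range_orderEmbOfFin]
      exact mem_ranFinset.mpr ⟨_, hb⟩
    exact ⟨s, hb⟩
  choose g hg using hσe
  have hinj : Injective g := fun r s h => e.injective (σ.2 _ _ _ (hg r) (h ▸ hg s))
  have hpres : ∀ a b c, sbtw a b c → sbtw (g a) (g b) (g c) := fun a b c h => by
    rw [← Fin.sbtw_map_iff e'.strictMono]
    exact hσ (hg a) (hg b) (hg c) ((Fin.sbtw_map_iff e.strictMono).mpr h)
  refine ⟨(g 0).val, fun r => ?_⟩
  rw [hg r, Fin.apply_eq_apply_zero_add_of_sbtw hinj hpres r]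
  rfl

theorem isCyclicShift_iff_preservesSBtw {σ : PartialInj n} :
    IsCyclicShift σ ↔ PreservesSBtw σ.1 :=
  ⟨IsCyclicShift.preservesSBtw, isCyclicShift_of_preservesSBtw⟩

end PartialInj

/-- The set `C_n` of partial cyclic shifts is closed under composition and inverses,
hence is an inverse subsemigroup of `R_n`. -/
theorem stmt13 (n : ℕ) :
    (∀ σ τ : PartialInj n, IsCyclicShift σ → IsCyclicShift τ →
      IsCyclicShift (pcomp σ τ)) ∧
    (∀ σ : PartialInj n, IsCyclicShift σ → IsCyclicShift (pinv σ)) := by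
  simp only [isCyclicShift_iff_preservesSBtw]
  refine ⟨fun σ τ hσ hτ => hσ.bind hτ, fun σ hσ a b c a' b' c' ha hb hc habc => ?_⟩
  exact hσ.sbtw_of_sbtw (pinv_eq_some ha) (pinv_eq_some hb) (pinv_eq_some hc) habc
end

section
/- The partial cyclic shift monoid C_n has cardinality 1 + Σ_{k=1}^{n} C(n,k)² · k. -/
/-!
A cyclic shift with nonempty domain `S` is determined by `S`, its range `T` (with `|T| = |S|`) and
the shift `j ∈ ℤ/|S|`, and each such triple gives a cyclic shift; only the empty map has empty
domain. So there are `1 + ∑_k C(n,k)² k` of them.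
-/

namespace PartialInj

variable {n : ℕ}

@[ext]
lemma ext {σ τ : PartialInj n} (h : ∀ a, σ.1 a = τ.1 a) : σ = τ :=
  Subtype.ext (funext h)

lemma mem_domFinset {σ : PartialInj n} {a : Fin n} : a ∈ domFinset σ ↔ (σ.1 a).isSome := by
  simp [domFinset]

lemma mem_ranFinset {σ : PartialInj n} {b : Fin n} : b ∈ ranFinset σ ↔ ∃ a, σ.1 a = some b := by
  simp [ranFinset]

lemma apply_eq_none_of_notMem_domFinset {σ : PartialInj n} {a : Fin n}
    (ha : a ∉ domFinset σ) : σ.1 a = none := by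
  simpa [mem_domFinset] using ha

def empty (n : ℕ) : PartialInj n :=
  ⟨fun _ => none, fun _ _ _ h => by simp at h⟩

@[simp]
lemma domFinset_empty : domFinset (empty n) = ∅ := by
  simp [domFinset, empty]

@[simp]
lemma ranFinset_empty : ranFinset (empty n) = ∅ := by
  simp [ranFinset, empty]

lemma eq_empty_of_domFinset_eq_empty {σ : PartialInj n} (h : domFinset σ = ∅) :
    σ = empty n :=
  ext fun a => apply_eq_none_of_notMem_domFinset (h ▸ Finset.notMem_empty a)

def ofEquiv {S T : Finset (Fin n)} (e : S ≃ T) : PartialInj n :=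
  ⟨fun a => if ha : a ∈ S then some (e ⟨a, ha⟩) else none, by
    intro a b c ha hb
    dsimp only at ha hb
    split_ifs at ha hb with haS hbS
    · have := e.injective (Subtype.ext ((Option.some_injective _ ha).trans
        (Option.some_injective _ hb).symm))
      exact congrArg Subtype.val this⟩

variable {S T : Finset (Fin n)}

lemma ofEquiv_apply (e : S ≃ T) (x : S) : (ofEquiv e).1 x = some (e x : Fin n) := by
  simp [ofEquiv]

lemma ofEquiv_apply_of_notMem (e : S ≃ T) {a : Fin n} (ha : a ∉ S) :
    (ofEquiv e).1 a = none := by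
  simp [ofEquiv, ha]

@[simp]
lemma domFinset_ofEquiv (e : S ≃ T) : domFinset (ofEquiv e) = S := by
  ext a
  by_cases ha : a ∈ S <;> simp [mem_domFinset, ofEquiv, ha]

@[simp]
lemma ranFinset_ofEquiv (e : S ≃ T) : ranFinset (ofEquiv e) = T := by
  ext b
  refine ⟨fun hb => ?_, fun hb => mem_ranFinset.mpr ⟨e.symm ⟨b, hb⟩, by simp [ofEquiv_apply]⟩⟩
  obtain ⟨a, ha⟩ := mem_ranFinset.mp hb
  by_cases haS : a ∈ S
  · rw [ofEquiv_apply e ⟨a, haS⟩, Option.some_inj] at ha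
    exact ha ▸ (e ⟨a, haS⟩).2
  · simp [ofEquiv_apply_of_notMem e haS] at ha

lemma ofEquiv_injective : Function.Injective (ofEquiv : (S ≃ T) → PartialInj n) := by
  intro e e' h
  refine Equiv.ext fun x => ?_
  simpa [ofEquiv_apply] using congrArg (fun σ : PartialInj n => σ.1 x) h

end PartialInj

section Shift

open PartialInj

variable {n : ℕ} {S T : Finset (Fin n)}

/-- `s_r ↦ t_{j + r}`, the index addition taking place in `Fin |S|`, i.e. modulo `|S|`. -/
def shiftEquiv (hT : T.card = S.card) (j : Fin S.card) : S ≃ T :=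
  haveI : NeZero S.card := NeZero.of_pos j.pos
  (S.orderIsoOfFin rfl).symm.toEquiv.trans ((Equiv.addLeft j).trans (T.orderIsoOfFin hT).toEquiv)

lemma shiftEquiv_orderIsoOfFin (hT : T.card = S.card) (j r : Fin S.card) :
    shiftEquiv hT j (S.orderIsoOfFin rfl r) = T.orderIsoOfFin hT (j + r) := by
  simp [shiftEquiv]

lemma shiftEquiv_injective (hT : T.card = S.card) :
    Function.Injective (shiftEquiv hT) := by
  intro j j' h
  have h0 := congrArg (fun e => e (S.orderIsoOfFin rfl ⟨0, j.pos⟩)) h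
  simpa [shiftEquiv_orderIsoOfFin, Fin.ext_iff, Fin.val_add, Nat.mod_eq_of_lt] using h0

lemma isCyclicShift_of_apply {σ : PartialInj n} (hS : domFinset σ = S) (hT : ranFinset σ = T)
    {k : ℕ} (hSk : S.card = k) (hTk : T.card = k) (j : ℕ)
    (h : ∀ r : Fin k, σ.1 (S.orderIsoOfFin hSk r) =
      some (T.orderIsoOfFin hTk ⟨(j + r) % k, Nat.mod_lt _ r.pos⟩ : Fin n)) :
    IsCyclicShift σ := by
  subst hS hT
  exact ⟨k, hSk, hTk, j, h⟩

lemma isCyclicShift_ofEquiv_shiftEquiv (hT : T.card = S.card) (j : Fin S.card) :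
    IsCyclicShift (ofEquiv (shiftEquiv hT j)) := by
  refine isCyclicShift_of_apply (domFinset_ofEquiv _) (ranFinset_ofEquiv _) rfl hT j fun r => ?_
  rw [ofEquiv_apply, shiftEquiv_orderIsoOfFin]
  rfl

end Shift

namespace IsCyclicShift

open PartialInj

variable {n : ℕ}

lemma eq_empty_or_eq_ofEquiv_shiftEquiv {σ : PartialInj n} (hσ : IsCyclicShift σ) :
    σ = empty n ∨ ∃ (hT : (ranFinset σ).card = (domFinset σ).card) (j : Fin (domFinset σ).card),
      σ = ofEquiv (shiftEquiv hT j) := by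
  obtain ⟨k, hS, hT, j, h⟩ := hσ
  subst hS
  rcases Nat.eq_zero_or_pos (domFinset σ).card with hk | hk
  · exact Or.inl (eq_empty_of_domFinset_eq_empty (Finset.card_eq_zero.mp hk))
  refine Or.inr ⟨hT, ⟨j % _, Nat.mod_lt _ hk⟩, ext fun a => ?_⟩
  by_cases ha : a ∈ domFinset σ
  · obtain ⟨r, rfl⟩ : ∃ r, ((domFinset σ).orderIsoOfFin rfl r : Fin n) = a :=
      ⟨((domFinset σ).orderIsoOfFin rfl).symm ⟨a, ha⟩, by simp⟩
    rw [h r, ofEquiv_apply, shiftEquiv_orderIsoOfFin]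
    congr 3
    simp [Fin.ext_iff, Fin.val_add, Nat.mod_add_mod]
  · rw [apply_eq_none_of_notMem_domFinset ha, ofEquiv_apply_of_notMem _ ha]

end IsCyclicShift

open PartialInj in
lemma isCyclicShift_empty (n : ℕ) : IsCyclicShift (empty n) :=
  isCyclicShift_of_apply domFinset_empty ranFinset_empty rfl rfl 0 fun r => r.elim0

/-- Parameters `⟨S, ⟨T, hT⟩, j⟩` of the nonempty cyclic shifts `ofEquiv (shiftEquiv hT j)`.
There are none with `S = ∅`, as `Fin 0` is empty: the empty map is counted separately. -/
abbrev ShiftData (n : ℕ) :=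
  Σ S : Finset (Fin n), {T : Finset (Fin n) // T.card = S.card} × Fin S.card

namespace ShiftData

open PartialInj

variable {n : ℕ}

def toCyclicShift : Option (ShiftData n) → {σ : PartialInj n // IsCyclicShift σ}
  | none => ⟨empty n, isCyclicShift_empty n⟩
  | some ⟨_, T, j⟩ => ⟨ofEquiv (shiftEquiv T.2 j), isCyclicShift_ofEquiv_shiftEquiv T.2 j⟩

lemma toCyclicShift_injective : Function.Injective (toCyclicShift (n := n)) := by
  have hne (S : Finset (Fin n)) (j : Fin S.card) : S ≠ ∅ :=
    Finset.nonempty_iff_ne_empty.mp (Finset.card_pos.mp j.pos)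
  rintro (_ | ⟨S, ⟨T, hT⟩, j⟩) (_ | ⟨S', ⟨T', hT'⟩, j'⟩) h <;>
    have h := congrArg Subtype.val h <;> simp only [toCyclicShift] at h
  · rfl
  · exact absurd (by simpa using (congrArg domFinset h).symm) (hne S' j')
  · exact absurd (by simpa using congrArg domFinset h) (hne S j)
  obtain rfl : S = S' := by simpa using congrArg domFinset h
  obtain rfl : T = T' := by simpa using congrArg ranFinset h
  rw [shiftEquiv_injective hT (ofEquiv_injective h)]

lemma toCyclicShift_surjective : Function.Surjective (toCyclicShift (n := n)) := by
  rintro ⟨σ, hσ⟩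
  rcases hσ.eq_empty_or_eq_ofEquiv_shiftEquiv with h | ⟨hT, j, h⟩
  · exact ⟨none, Subtype.ext h.symm⟩
  · exact ⟨some ⟨_, ⟨_, hT⟩, j⟩, Subtype.ext h.symm⟩

lemma card_eq : Fintype.card (ShiftData n) = ∑ k ∈ Finset.Icc 1 n, n.choose k ^ 2 * k :=
  calc Fintype.card (ShiftData n)
      = ∑ S ∈ (Finset.univ : Finset (Fin n)).powerset, n.choose S.card * S.card := by
        simp [Fintype.card_sigma, Fintype.card_finset_len]
    _ = ∑ k ∈ Finset.range (n + 1), n.choose k ^ 2 * k := by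
        rw [Finset.sum_powerset_apply_card (fun k => n.choose k * k)]
        simp [sq, mul_assoc]
    _ = ∑ k ∈ Finset.Icc 1 n, n.choose k ^ 2 * k := by
        rw [Finset.sum_range_eq_add_Ico _ n.add_one_pos, Nat.mul_zero, zero_add,
          Finset.Ico_add_one_right_eq_Icc]

end ShiftData

/-- The partial cyclic shift monoid `C_n` has cardinality `1 + ∑_{k=1}^{n} C(n,k)² k`. -/
theorem stmt14 (n : ℕ) :
    Nat.card {σ : PartialInj n // IsCyclicShift σ} =
      1 + ∑ k ∈ Finset.Icc 1 n, n.choose k ^ 2 * k := by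
  rw [← Nat.card_eq_of_bijective _
      ⟨ShiftData.toCyclicShift_injective, ShiftData.toCyclicShift_surjective⟩,
    Nat.card_eq_fintype_card, Fintype.card_option, ShiftData.card_eq, add_comm]
end

section
/- Two elements a, b of Rot_n are D-related if and only if there exists an integer k with r^k · ran(a) = ran(b), i.e., ran(b) is a rotation of ran(a); consequently the D-class of an idempotent e contains exactly j(e) idempotents. -/
/-- The rank of a partial injection. -/
def rk {n : ℕ} (f : PartialInj n) : ℕ := (domFinset f).card

/-- The partial injection associated with a permutation. -/
def permPI {n : ℕ} (p : Equiv.Perm (Fin n)) : PartialInj n :=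
  ⟨fun i => some (p i), by
    intro a b c ha hb
    rw [Option.some_inj] at ha hb
    exact p.injective (ha.trans hb.symm)⟩

/-- `rzpow n k` is `r^k`, where `r : i ↦ i + 1 (mod n)`. -/
def rzpow (n : ℕ) (k : ℤ) : PartialInj n := permPI (finRotate n ^ k)

/-- A partial rotation: `σ = r^k f` with `f` idempotent. -/
def IsPartialRotation {n : ℕ} (σ : PartialInj n) : Prop :=
  ∃ (k : ℤ) (f : PartialInj n), pcomp f f = f ∧ σ = pcomp (rzpow n k) f

/-- The rotation action `r^k · e = r^k e r^{-k}`. -/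
def rotAct (n : ℕ) (k : ℤ) (e : PartialInj n) : PartialInj n :=
  pcomp (rzpow n k) (pcomp e (rzpow n (-k)))

/-!
For an idempotent `g`, the partial rotation `x = r^k g` has `dom x = x⁻¹ x = g` and
`ran x = x x⁻¹ = r^k g r^{-k}`. So `a D b` says exactly that `ran b = r^k · ran a` for some `k`,
and the idempotents `D`-related to `e` form the orbit of `e` under the `ℤ`-action
`k ↦ r^k · e`. The minimality of `j` makes the stabilizer of `e` equal to `jℤ`, so by
orbit–stabilizer the orbit has `[ℤ : jℤ] = j` elements.
-/

namespace AddAction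

variable {α : Type*} [AddAction ℤ α]

lemma stabilizer_int_eq_zmultiples {x : α} {j : ℕ} (hj : 0 < j) (hper : (j : ℤ) +ᵥ x = x)
    (hmin : ∀ i : ℕ, 0 < i → i < j → (i : ℤ) +ᵥ x ≠ x) :
    stabilizer ℤ x = AddSubgroup.zmultiples (j : ℤ) := by
  refine le_antisymm (fun k hk => ?_) (AddSubgroup.zmultiples_le_of_mem hper)
  have hmod : k % j ∈ stabilizer ℤ x := by
    rw [Int.emod_def]
    exact sub_mem hk (mul_comm (j : ℤ) (k / j) ▸ zsmul_mem (mem_stabilizer_iff.mpr hper) (k / j))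
  have hnonneg : 0 ≤ k % j := Int.emod_nonneg k (by omega)
  have hlt : k % j < j := Int.emod_lt_of_pos k (by omega)
  refine Int.mem_zmultiples_iff.mpr (Int.dvd_of_emod_eq_zero (by_contra fun hne => ?_))
  refine hmin (k % j).toNat (by omega) (by omega) ?_
  rwa [Int.toNat_of_nonneg hnonneg, ← mem_stabilizer_iff]

lemma ncard_orbit_int {x : α} {j : ℕ} (hj : 0 < j) (hper : (j : ℤ) +ᵥ x = x)
    (hmin : ∀ i : ℕ, 0 < i → i < j → (i : ℤ) +ᵥ x ≠ x) :
    (orbit ℤ x).ncard = j := by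
  rw [← index_stabilizer, stabilizer_int_eq_zmultiples hj hper hmin, Int.index_zmultiples,
    Int.natAbs_natCast]

end AddAction

namespace PartialInj

variable {n : ℕ}

lemma ext_apply {f g : PartialInj n} (h : ∀ a, f.1 a = g.1 a) : f = g :=
  Subtype.ext (funext h)

lemma pcomp_apply (f g : PartialInj n) (a : Fin n) : (pcomp f g).1 a = (g.1 a).bind f.1 := rfl

lemma pcomp_rzpow_apply (k : ℤ) (f : PartialInj n) (a : Fin n) :
    (pcomp (rzpow n k) f).1 a = (f.1 a).map (finRotate n ^ k) := by
  rw [pcomp_apply]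
  cases f.1 a <;> rfl

lemma rotAct_apply (k : ℤ) (e : PartialInj n) (b : Fin n) :
    (rotAct n k e).1 b = (e.1 ((finRotate n ^ k)⁻¹ b)).map (finRotate n ^ k) := by
  rw [rotAct, pcomp_rzpow_apply, pcomp_apply, ← zpow_neg]
  rfl

lemma pinv_apply_eq_some_iff {x : PartialInj n} {a b : Fin n} :
    (pinv x).1 b = some a ↔ x.1 a = some b := by
  change (if h : ∃ a', x.1 a' = some b then some h.choose else none) = some a ↔ _
  split_ifs with h
  · rw [Option.some_inj]
    exact ⟨fun ha => ha ▸ h.choose_spec, fun ha => x.2 _ _ _ h.choose_spec ha⟩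
  · exact ⟨fun h' => absurd h' (by simp), fun ha => absurd ⟨a, ha⟩ h⟩

lemma pinv_pcomp_apply (x : PartialInj n) (a : Fin n) :
    (pcomp (pinv x) x).1 a = (x.1 a).map fun _ => a := by
  rw [pcomp_apply]
  cases hx : x.1 a with
  | none => rfl
  | some b => exact pinv_apply_eq_some_iff.mpr hx

lemma pcomp_pinv_apply (x : PartialInj n) (b : Fin n) :
    (pcomp x (pinv x)).1 b = ((pinv x).1 b).map fun _ => b := by
  rw [pcomp_apply]
  cases hx : (pinv x).1 b with
  | none => rfl
  | some a => exact pinv_apply_eq_some_iff.mp hx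

def IsPartialId (e : PartialInj n) : Prop := ∀ a b, e.1 a = some b → b = a

lemma pcomp_self_eq_self_iff {e : PartialInj n} : pcomp e e = e ↔ IsPartialId e := by
  constructor
  · intro h a b hab
    have hb : e.1 b = some b := by
      simpa [pcomp_apply, hab] using congrArg (fun f : PartialInj n => f.1 a) h
    exact (e.2 a b b hab hb).symm
  · intro h
    apply ext_apply fun a => ?_
    rw [pcomp_apply]
    cases hb : e.1 a with
    | none => rfl
    | some b => obtain rfl := h a b hb; exact hb

lemma isPartialId_pcomp_pinv (x : PartialInj n) : IsPartialId (pcomp x (pinv x)) := by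
  intro b c h
  rw [pcomp_pinv_apply, Option.map_eq_some_iff] at h
  obtain ⟨_, _, rfl⟩ := h
  rfl

lemma IsPartialId.pinv_eq {e : PartialInj n} (he : IsPartialId e) : pinv e = e := by
  refine ext_apply fun b => Option.ext fun a => ?_
  rw [pinv_apply_eq_some_iff]
  constructor
  · intro h
    obtain rfl := he a b h
    exact h
  · intro h
    obtain rfl := he b a h
    exact h

lemma IsPartialId.pcomp_self {e : PartialInj n} (he : IsPartialId e) : pcomp e e = e :=
  pcomp_self_eq_self_iff.mpr he

lemma IsPartialId.pcomp_pinv {e : PartialInj n} (he : IsPartialId e) : pcomp e (pinv e) = e := by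
  rw [he.pinv_eq, he.pcomp_self]

lemma IsPartialId.pinv_pcomp {e : PartialInj n} (he : IsPartialId e) : pcomp (pinv e) e = e := by
  rw [he.pinv_eq, he.pcomp_self]

lemma pinv_pcomp_rzpow_apply (k : ℤ) (f : PartialInj n) (b : Fin n) :
    (pinv (pcomp (rzpow n k) f)).1 b = (pinv f).1 ((finRotate n ^ k)⁻¹ b) := by
  refine Option.ext fun a => ?_
  rw [pinv_apply_eq_some_iff, pinv_apply_eq_some_iff, pcomp_rzpow_apply, Option.map_eq_some_iff]
  constructor
  · rintro ⟨c, hc, rfl⟩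
    simp [hc]
  · exact fun h => ⟨_, h, Equiv.apply_symm_apply _ _⟩

lemma dom_rzpow_pcomp (k : ℤ) (f : PartialInj n) :
    pcomp (pinv (pcomp (rzpow n k) f)) (pcomp (rzpow n k) f) = pcomp (pinv f) f := by
  refine ext_apply fun a => ?_
  rw [pinv_pcomp_apply, pinv_pcomp_apply, pcomp_rzpow_apply, Option.map_map]
  rfl

lemma ran_rzpow_pcomp (k : ℤ) (f : PartialInj n) :
    pcomp (pcomp (rzpow n k) f) (pinv (pcomp (rzpow n k) f)) = rotAct n k (pcomp f (pinv f)) := by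
  refine ext_apply fun b => ?_
  rw [pcomp_pinv_apply, rotAct_apply, pcomp_pinv_apply, pinv_pcomp_rzpow_apply, Option.map_map]
  simp [Function.comp_def]

theorem exists_isPartialRotation_dom_ran_iff (a b : PartialInj n) :
    (∃ x : PartialInj n, IsPartialRotation x ∧
        pcomp (pinv x) x = pcomp a (pinv a) ∧ pcomp x (pinv x) = pcomp b (pinv b)) ↔
      ∃ k : ℤ, rotAct n k (pcomp a (pinv a)) = pcomp b (pinv b) := by
  constructor
  · rintro ⟨x, ⟨k, g, hg, rfl⟩, hdom, hran⟩
    have hg : IsPartialId g := pcomp_self_eq_self_iff.mp hg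
    rw [dom_rzpow_pcomp, hg.pinv_pcomp] at hdom
    rw [ran_rzpow_pcomp, hg.pcomp_pinv, hdom] at hran
    exact ⟨k, hran⟩
  · rintro ⟨k, hk⟩
    have he := isPartialId_pcomp_pinv a
    refine ⟨pcomp (rzpow n k) (pcomp a (pinv a)), ⟨k, _, he.pcomp_self, rfl⟩, ?_, ?_⟩
    · rw [dom_rzpow_pcomp, he.pinv_pcomp]
    · rw [ran_rzpow_pcomp, he.pcomp_pinv, hk]

lemma rotAct_zero (e : PartialInj n) : rotAct n 0 e = e :=
  ext_apply fun b => by simp [rotAct_apply]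

lemma rotAct_add (k l : ℤ) (e : PartialInj n) :
    rotAct n (k + l) e = rotAct n k (rotAct n l e) :=
  ext_apply fun b => by simp [rotAct_apply, zpow_add, Option.map_map, Function.comp_def]

instance : AddAction ℤ (PartialInj n) where
  vadd := rotAct n
  zero_vadd := rotAct_zero
  add_vadd := rotAct_add

lemma IsPartialId.rotAct {e : PartialInj n} (he : IsPartialId e) (k : ℤ) :
    IsPartialId (rotAct n k e) :=
  he.pcomp_pinv ▸ ran_rzpow_pcomp k e ▸ isPartialId_pcomp_pinv _

theorem setOf_idempotent_dRel_eq_orbit {e : PartialInj n} (hidem : pcomp e e = e) :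
    {f : PartialInj n | pcomp f f = f ∧ ∃ x : PartialInj n, IsPartialRotation x ∧
        pcomp (pinv x) x = pcomp e (pinv e) ∧ pcomp x (pinv x) = pcomp f (pinv f)} =
      AddAction.orbit ℤ e := by
  have he : IsPartialId e := pcomp_self_eq_self_iff.mp hidem
  ext f
  rw [Set.mem_ofPred_eq, exists_isPartialRotation_dom_ran_iff, he.pcomp_pinv,
    AddAction.mem_orbit_iff]
  constructor
  · rintro ⟨hf, k, hk⟩
    exact ⟨k, hk.trans (pcomp_self_eq_self_iff.mp hf).pcomp_pinv⟩
  · rintro ⟨k, rfl⟩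
    have hk := he.rotAct k
    exact ⟨hk.pcomp_self, k, hk.pcomp_pinv.symm⟩

end PartialInj

/-- `a, b ∈ Rot_n` are `D`-related iff `ran b` is a rotation of `ran a`; consequently
the `D`-class of an idempotent `e` contains exactly `j(e)` idempotents. -/
theorem stmt18 (n : ℕ) :
    (∀ a b : PartialInj n, IsPartialRotation a → IsPartialRotation b →
      ((∃ x : PartialInj n, IsPartialRotation x ∧
          pcomp (pinv x) x = pcomp a (pinv a) ∧
          pcomp x (pinv x) = pcomp b (pinv b)) ↔
        ∃ k : ℤ, rotAct n k (pcomp a (pinv a)) = pcomp b (pinv b))) ∧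
    ∀ (e : PartialInj n), pcomp e e = e → IsPartialRotation e →
      ∀ (j : ℕ), 0 < j → rotAct n (j : ℤ) e = e →
        (∀ i : ℕ, 0 < i → i < j → rotAct n (i : ℤ) e ≠ e) →
        Nat.card {f : PartialInj n | pcomp f f = f ∧
          ∃ x : PartialInj n, IsPartialRotation x ∧
            pcomp (pinv x) x = pcomp e (pinv e) ∧
            pcomp x (pinv x) = pcomp f (pinv f)} = j := by
  refine ⟨fun a b _ _ => PartialInj.exists_isPartialRotation_dom_ran_iff a b, ?_⟩
  intro e he _ j hj hper hmin
  rw [PartialInj.setOf_idempotent_dRel_eq_orbit he, Nat.card_coe_set_eq]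
  exact AddAction.ncard_orbit_int hj hper hmin
end

section
/- The partial rotation monoid Rot_n has cardinality 2^n · n − n + 1. -/
/-! An idempotent of the rook monoid is a partial identity `id_S`, so a partial rotation `r^k id_S`
maps `a ↦ a + k` on `S` and is undefined off `S`. For `S ≠ ∅` the map determines `S` (its domain)
and `k mod n` (read off at any point of `S`), while every `k` gives the same empty map for `S = ∅`.
So `Rot_n` is in bijection with `Option (ℤ/n × {S // S ≠ ∅})`, of size `n (2^n - 1) + 1`. -/

open scoped Fin.CommRing

lemma finRotate_zpow_apply {n : ℕ} [NeZero n] (k : ℤ) (a : Fin n) :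
    (finRotate n ^ k) a = a + k := by
  induction k using Int.induction_on generalizing a with
  | zero => simp
  | succ k ih =>
    rw [zpow_add_one, Equiv.Perm.mul_apply, finRotate_apply, ih]
    push_cast
    ring
  | pred k ih =>
    rw [zpow_sub_one, Equiv.Perm.mul_apply, Equiv.Perm.inv_def, finRotate_symm_apply, ih]
    push_cast
    ring

lemma Fintype.card_finset_nonempty (α : Type*) [Fintype α] :
    Fintype.card {S : Finset α // S.Nonempty} = 2 ^ Fintype.card α - 1 := by
  classical
  rw [Fintype.card_congr (Equiv.subtypeEquivRight fun S => Finset.nonempty_iff_ne_empty),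
    Fintype.card_subtype_compl, Fintype.card_subtype_eq, Fintype.card_finset]

namespace PartialInj

variable {n : ℕ}

def pid (S : Finset (Fin n)) : PartialInj n :=
  ⟨fun a => if a ∈ S then some a else none, by
    intro a b c ha hb
    simp only at ha hb
    split_ifs at ha hb
    simp_all⟩

lemma pid_apply (S : Finset (Fin n)) (a : Fin n) :
    (pid S).1 a = if a ∈ S then some a else none := rfl

lemma pcomp_pid_self (S : Finset (Fin n)) : pcomp (pid S) (pid S) = pid S := by
  ext a : 2
  by_cases h : a ∈ S <;> simp [pcomp, pid_apply, h]

lemma eq_pid_of_pcomp_self {f : PartialInj n} (hf : pcomp f f = f) :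
    f = pid {a | f.1 a = some a} := by
  ext a : 2
  rcases h : f.1 a with _ | b
  · simp [pid_apply, h]
  · have hb : f.1 b = some b := by
      simpa [pcomp, h] using congrFun (congrArg Subtype.val hf) a
    obtain rfl := f.2 a b b h hb
    simp [pid_apply, h]

def rot (k : ℤ) (S : Finset (Fin n)) : PartialInj n := pcomp (rzpow n k) (pid S)

lemma isPartialRotation_iff {σ : PartialInj n} :
    IsPartialRotation σ ↔ ∃ (k : ℤ) (S : Finset (Fin n)), σ = rot k S := by
  constructor
  · rintro ⟨k, f, hf, rfl⟩
    exact ⟨k, _, by rw [rot, ← eq_pid_of_pcomp_self hf]⟩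
  · rintro ⟨k, S, rfl⟩
    exact ⟨k, pid S, pcomp_pid_self S, rfl⟩

lemma isPartialRotation_rot (k : ℤ) (S : Finset (Fin n)) : IsPartialRotation (rot k S) :=
  isPartialRotation_iff.2 ⟨k, S, rfl⟩

lemma rot_apply [NeZero n] (k : ℤ) (S : Finset (Fin n)) (a : Fin n) :
    (rot k S).1 a = if a ∈ S then some (a + k) else none := by
  by_cases h : a ∈ S <;> simp [rot, pcomp, rzpow, permPI, pid_apply, finRotate_zpow_apply, h]

lemma rot_empty (k : ℤ) : rot k (∅ : Finset (Fin n)) = rot 0 ∅ := by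
  ext a : 2
  simp [rot, pcomp, pid_apply]

lemma rot_eq_rot_iff [NeZero n] {k j : ℤ} {S T : Finset (Fin n)} :
    rot k S = rot j T ↔ S = T ∧ (S.Nonempty → (k : Fin n) = j) := by
  constructor
  · intro h
    have h' (a : Fin n) := congrFun (congrArg Subtype.val h) a
    simp only [rot_apply] at h'
    have hST : S = T := by
      ext a
      have := h' a
      split_ifs at this <;> simp_all
    refine ⟨hST, fun ⟨a, ha⟩ => ?_⟩
    simpa [ha, hST ▸ ha] using h' a
  · rintro ⟨rfl, hk⟩
    ext a : 2
    simp only [rot_apply]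
    split_ifs with ha
    · rw [hk ⟨a, ha⟩]
    · rfl

def rotParam : Option (Fin n × {S : Finset (Fin n) // S.Nonempty}) →
    {σ : PartialInj n // IsPartialRotation σ}
  | none => ⟨rot 0 ∅, isPartialRotation_rot 0 ∅⟩
  | some (k, S) => ⟨rot k.val S, isPartialRotation_rot _ _⟩

lemma rotParam_bijective : Function.Bijective (rotParam (n := n)) := by
  constructor
  · rintro (_ | ⟨k, S, hS⟩) (_ | ⟨j, T, hT⟩) h
    · rfl
    · have := j.neZero
      obtain ⟨hT', -⟩ := rot_eq_rot_iff.1 (congrArg Subtype.val h)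
      exact absurd hT'.symm hT.ne_empty
    · have := k.neZero
      obtain ⟨hS', -⟩ := rot_eq_rot_iff.1 (congrArg Subtype.val h)
      exact absurd hS' hS.ne_empty
    · have := k.neZero
      obtain ⟨rfl, hkj⟩ := rot_eq_rot_iff.1 (congrArg Subtype.val h)
      simp only [Int.cast_natCast, Fin.cast_val_eq_self] at hkj
      rw [hkj hS]
  · rintro ⟨σ, hσ⟩
    obtain ⟨k, S, rfl⟩ := isPartialRotation_iff.1 hσ
    rcases S.eq_empty_or_nonempty with rfl | ⟨a, ha⟩
    · exact ⟨none, Subtype.ext (rot_empty k).symm⟩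
    · have := a.neZero
      refine ⟨some (k, ⟨S, a, ha⟩), Subtype.ext (rot_eq_rot_iff.2 ⟨rfl, fun _ => ?_⟩)⟩
      rw [Int.cast_natCast, Fin.cast_val_eq_self]

end PartialInj

/-- The partial rotation monoid `Rot_n` has cardinality `2^n · n - n + 1`. -/
theorem stmt19 (n : ℕ) :
    Nat.card {σ : PartialInj n // IsPartialRotation σ} = 2 ^ n * n - n + 1 := by
  rw [← Nat.card_congr (Equiv.ofBijective _ PartialInj.rotParam_bijective),
    Nat.card_eq_fintype_card, Fintype.card_option, Fintype.card_prod, Fintype.card_fin,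
    Fintype.card_finset_nonempty, Fintype.card_fin, Nat.mul_sub_one, mul_comm]
end
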